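/- Let G = (V, E, w) be a finite weighted graph with distinct edge weights, and let G' = (V, E', w) with E' ⊆ E. Every edge of MSF(G) is either an edge of MSF(G') or an edge of E \ E'. Equivalently, MSF(G) ⊆ MSF(G') ∪ (E \ E'). -/

import Mathlib

open SimpleGraph

variable {V : Type*} [Fintype V]

/-- `F` is a minimum spanning forest of `G` w.r.t. the weight function `w`:
it is a set of edges of `G` forming an acyclic subgraph with the same
reachability relation as `G`, of minimum total weight among all such sets. -/
def IsMSF (G : SimpleGraph V) (w : Sym2 V → ℝ) (F : Set (Sym2 V)) : Prop :=
  F ⊆ G.edgeSet ∧ (SimpleGraph.fromEdgeSet F).IsAcyclic ∧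
  (∀ u v : V, G.Reachable u v ↔ (SimpleGraph.fromEdgeSet F).Reachable u v) ∧
  ∀ F' : Set (Sym2 V), F' ⊆ G.edgeSet → (SimpleGraph.fromEdgeSet F').IsAcyclic →
    (∀ u v : V, G.Reachable u v ↔ (SimpleGraph.fromEdgeSet F').Reachable u v) →
    ∑ᶠ e ∈ F, w e ≤ ∑ᶠ e ∈ F', w e

/-- `F` is a minimum spanning tree of the connected graph `G` w.r.t. `w`:
a set of edges of `G` forming a connected acyclic spanning subgraph,
of minimum total weight among all such sets. -/
def IsMST (G : SimpleGraph V) (w : Sym2 V → ℝ) (F : Set (Sym2 V)) : Prop :=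
  F ⊆ G.edgeSet ∧ (SimpleGraph.fromEdgeSet F).IsAcyclic ∧
  (SimpleGraph.fromEdgeSet F).Connected ∧
  ∀ F' : Set (Sym2 V), F' ⊆ G.edgeSet → (SimpleGraph.fromEdgeSet F').IsAcyclic →
    (SimpleGraph.fromEdgeSet F').Connected →
    ∑ᶠ e ∈ F, w e ≤ ∑ᶠ e ∈ F', w e

/-
Let `e = s(u, v) ∈ F` be an edge of `G'` outside `F'`. The `F'`-path from `u` to `v` must cross
the cut of `F - e` separating `u` from `v`, say along `f`. Replacing `f` by `e` in `F'` and `e` by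
`f` in `F` gives spanning forests of `G'` and of `G`, so minimality yields `w f ≤ w e` and
`w e ≤ w f`; distinct weights then force `e = f ∈ F'`.
-/

namespace SimpleGraph

variable {α : Type*}

theorem fromEdgeSet_le_of_subset_edgeSet {G : SimpleGraph α} {s : Set (Sym2 α)}
    (h : s ⊆ G.edgeSet) : fromEdgeSet s ≤ G :=
  (fromEdgeSet_le _).2 (Set.sdiff_subset.trans h)

theorem Reachable.of_forall_adj_reachable {G H : SimpleGraph α}
    (h : ∀ a b, G.Adj a b → H.Reachable a b) {u v : α} (huv : G.Reachable u v) :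
    H.Reachable u v := by
  obtain ⟨p⟩ := huv
  induction p with
  | nil => rfl
  | cons hadj _ ih => exact (h _ _ hadj).trans ih

theorem Reachable.of_sup_edge {G : SimpleGraph α} {x y z : α}
    (h : (G ⊔ edge x y).Reachable z x) : G.Reachable z x ∨ G.Reachable z y := by
  obtain ⟨p⟩ := h
  generalize hH : G ⊔ edge x y = H at p
  induction p with
  | nil => exact .inl .rfl
  | @cons z z' _ hadj _ ih =>
    rcases hH ▸ hadj with hadj | hadj
    · exact (ih hH).imp hadj.reachable.trans hadj.reachable.trans
    · obtain ⟨⟨rfl, -⟩ | ⟨rfl, -⟩, -⟩ := (edge_adj _ _ _ _).1 hadj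
      · exact .inl .rfl
      · exact .inr .rfl

theorem Walk.IsPath.exists_reachable_deleteEdges_of_mem_edges {G : SimpleGraph α} {u v : α}
    {p : G.Walk u v} (hp : p.IsPath) {e : Sym2 α} (he : e ∈ p.edges) :
    ∃ x y, e = s(x, y) ∧ (G.deleteEdges {e}).Reachable u x ∧
      (G.deleteEdges {e}).Reachable y v := by
  induction p with
  | nil => simp at he
  | @cons u z v hadj q ih =>
    have hq : s(u, z) ∉ q.edges := (List.nodup_cons.1 hp.edges_nodup).1
    rcases List.mem_cons.1 he with rfl | he
    · refine ⟨u, z, rfl, .rfl, ⟨q.transfer _ fun f hf => ?_⟩⟩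
      rw [edgeSet_deleteEdges]
      exact ⟨q.edges_subset_edgeSet hf, fun h => hq (by rwa [Set.mem_singleton_iff.1 h] at hf)⟩
    · obtain ⟨x, y, rfl, hux, hyv⟩ := ih hp.of_cons he
      refine ⟨x, y, rfl, .trans (Adj.reachable ?_) hux, hyv⟩
      exact (deleteEdges_adj ..).2 ⟨hadj, fun h => hq (Set.mem_singleton_iff.1 h ▸ he)⟩

theorem IsAcyclic.not_reachable_deleteEdges_of_reachable {G : SimpleGraph α} (hG : G.IsAcyclic)
    {x y a b : α} (hxy : G.Adj x y) (hxa : (G.deleteEdges {s(x, y)}).Reachable x a)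
    (hby : (G.deleteEdges {s(x, y)}).Reachable b y) :
    ¬(G.deleteEdges {s(x, y)}).Reachable a b := fun hab =>
  isAcyclic_iff_forall_adj_isBridge.1 hG hxy (hxa.trans (hab.trans hby))

def IsSpanningForest (H : SimpleGraph α) (F : Set (Sym2 α)) : Prop :=
  F ⊆ H.edgeSet ∧ (fromEdgeSet F).IsAcyclic ∧
    ∀ u v, H.Reachable u v ↔ (fromEdgeSet F).Reachable u v

theorem IsSpanningForest.exchange {H : SimpleGraph α} {F : Set (Sym2 α)}
    (hF : H.IsSpanningForest F) {x y a b : α} (he : s(x, y) ∈ F) (hab : H.Adj a b)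
    (hxa : ((fromEdgeSet F).deleteEdges {s(x, y)}).Reachable x a)
    (hby : ((fromEdgeSet F).deleteEdges {s(x, y)}).Reachable b y) :
    H.IsSpanningForest (insert s(a, b) (F \ {s(x, y)})) := by
  obtain ⟨hsub, hacyc, hreach⟩ := hF
  have hxy : (fromEdgeSet F).Adj x y := (fromEdgeSet_adj _).2 ⟨he, (hsub he).ne⟩
  set K := (fromEdgeSet F).deleteEdges {s(x, y)}
  have hK : fromEdgeSet (insert s(a, b) (F \ {s(x, y)})) = K ⊔ edge a b := by
    rw [Set.insert_eq, fromEdgeSet_union, fromEdgeSet_sdiff, sup_comm]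
    rfl
  have hnab : ¬K.Reachable a b := hacyc.not_reachable_deleteEdges_of_reachable hxy hxa hby
  have hsub' : insert s(a, b) (F \ {s(x, y)}) ⊆ H.edgeSet :=
    Set.insert_subset hab (Set.sdiff_subset.trans hsub)
  have hle : K ≤ K ⊔ edge a b := le_sup_left
  have hab' : (K ⊔ edge a b).Adj a b := .inr ((edge_adj ..).2 ⟨.inl ⟨rfl, rfl⟩, hab.ne⟩)
  have hxy' : (K ⊔ edge a b).Reachable x y :=
    (hxa.mono hle).trans (hab'.reachable.trans (hby.mono hle))
  refine ⟨hsub', ?_, fun u v => ⟨fun huv => ?_, fun huv => ?_⟩⟩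
  · rw [hK]
    exact (hacyc.anti (deleteEdges_le _)).sup_edge_of_not_reachable hnab
  · rw [hK]
    refine ((hreach u v).1 huv).of_forall_adj_reachable fun c d hcd => ?_
    by_cases hcd' : s(c, d) = s(x, y)
    · rcases Sym2.eq_iff.1 hcd' with ⟨rfl, rfl⟩ | ⟨rfl, rfl⟩
      exacts [hxy', hxy'.symm]
    · exact (hle ((deleteEdges_adj ..).2 ⟨hcd, hcd'⟩)).reachable
  · exact huv.mono (fromEdgeSet_le_of_subset_edgeSet hsub')

end SimpleGraph

namespace IsMSF

variable {α : Type*} {H : SimpleGraph α} {w : Sym2 α → ℝ} {F : Set (Sym2 α)}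

theorem isSpanningForest (hF : IsMSF H w F) : H.IsSpanningForest F :=
  ⟨hF.1, hF.2.1, hF.2.2.1⟩

theorem finsum_le (hF : IsMSF H w F) {F' : Set (Sym2 α)} (hF' : H.IsSpanningForest F') :
    ∑ᶠ e ∈ F, w e ≤ ∑ᶠ e ∈ F', w e :=
  hF.2.2.2 F' hF'.1 hF'.2.1 hF'.2.2

theorem weight_le_of_exchange [Finite α] (hF : IsMSF H w F) {x y a b : α} (he : s(x, y) ∈ F)
    (hab : H.Adj a b) (hxa : ((fromEdgeSet F).deleteEdges {s(x, y)}).Reachable x a)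
    (hby : ((fromEdgeSet F).deleteEdges {s(x, y)}).Reachable b y) :
    w s(x, y) ≤ w s(a, b) := by
  have hxy : (fromEdgeSet F).Adj x y := (fromEdgeSet_adj _).2 ⟨he, (hF.1 he).ne⟩
  have hab' : s(a, b) ∉ F \ {s(x, y)} := fun h =>
    hF.2.1.not_reachable_deleteEdges_of_reachable hxy hxa hby
      ((deleteEdges_adj ..).2 ⟨(fromEdgeSet_adj _).2 ⟨h.1, hab.ne⟩, h.2⟩).reachable
  have hsum := finsum_mem_insert w (Set.notMem_sdiff_of_mem (Set.mem_singleton _))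
    (F \ {s(x, y)}).toFinite
  rw [Set.insert_sdiff_self_of_mem he] at hsum
  have hmin := hF.finsum_le (hF.isSpanningForest.exchange he hab hxa hby)
  rw [finsum_mem_insert _ hab' (Set.toFinite _), hsum] at hmin
  linarith

theorem weight_le_of_mem_edges_of_isPath [Finite α] (hF : IsMSF H w F) {u v : α}
    (huv : H.Adj u v) {p : (fromEdgeSet F).Walk u v} (hp : p.IsPath) {e : Sym2 α}
    (he : e ∈ p.edges) : w e ≤ w s(u, v) := by
  obtain ⟨x, y, rfl, hux, hyv⟩ := hp.exists_reachable_deleteEdges_of_mem_edges he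
  have heF : s(x, y) ∈ F := (edgeSet_fromEdgeSet F ▸ p.edges_subset_edgeSet he).1
  exact hF.weight_le_of_exchange heF huv hux.symm hyv.symm

theorem exists_weight_le_of_walk [Finite α] (hF : IsMSF H w F) {u v : α} (he : s(u, v) ∈ F)
    (p : H.Walk u v) : ∃ f ∈ p.edges, w s(u, v) ≤ w f := by
  set K := (fromEdgeSet F).deleteEdges {s(u, v)}
  have huv : (fromEdgeSet F).Adj u v := (fromEdgeSet_adj _).2 ⟨he, (hF.1 he).ne⟩
  have hnuv : ¬K.Reachable u v := isAcyclic_iff_forall_adj_isBridge.1 hF.2.1 huv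
  obtain ⟨d, hd, hud, hdv⟩ := p.exists_boundary_dart {z | K.Reachable u z} .rfl hnuv
  have hKH : K ≤ H := (deleteEdges_le _).trans (fromEdgeSet_le_of_subset_edgeSet hF.1)
  have hdu : (K ⊔ edge u v).Reachable d.snd u := by
    rw [show K ⊔ edge u v = fromEdgeSet F from sdiff_sup_cancel ((edge_le_iff _).2 (.inr huv))]
    exact (hF.2.2.1 _ _).1 ((hud.mono hKH).trans d.adj.reachable).symm
  have hdv : K.Reachable d.snd v := hdu.of_sup_edge.resolve_left fun h => hdv h.symm
  exact ⟨d.edge, List.mem_map_of_mem hd, hF.weight_le_of_exchange he d.adj hud hdv⟩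

end IsMSF

theorem msf_subset_msf_union_removed (G G' : SimpleGraph V) (w : Sym2 V → ℝ)
    (hle : G' ≤ G) (hinj : Set.InjOn w G.edgeSet)
    (F F' : Set (Sym2 V))
    (hF : IsMSF G w F) (hF' : IsMSF G' w F') :
    F ⊆ F' ∪ (G.edgeSet \ G'.edgeSet) := by
  rintro ⟨u, v⟩ he
  rcases em (s(u, v) ∈ F') with he' | he'
  · exact .inl he'
  refine .inr ⟨hF.1 he, fun huv => ?_⟩
  obtain ⟨p, hp⟩ := ((hF'.2.2.1 u v).1 huv.reachable).exists_isPath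
  have hF'G : fromEdgeSet F' ≤ G := (fromEdgeSet_le_of_subset_edgeSet hF'.1).trans hle
  obtain ⟨f, hf, hef⟩ := hF.exists_weight_le_of_walk he (p.mapLe hF'G)
  rw [Walk.edges_mapLe_eq_edges] at hf
  have hfe := hF'.weight_le_of_mem_edges_of_isPath huv hp hf
  have hfF' : f ∈ F' := (edgeSet_fromEdgeSet F' ▸ p.edges_subset_edgeSet hf).1
  have hfG : f ∈ G.edgeSet := edgeSet_mono hF'G (p.edges_subset_edgeSet hf)
  obtain rfl : f = s(u, v) := hinj hfG (hF.1 he) (le_antisymm hfe hef)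
  exact he' hfF'
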